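/- There exist two edge-disjoint graphs G_1 and G_2 on the same 5-element vertex set V, each being a cycle of length 5 (so each has m = 5 edges), such that for every bipartition of V into classes A and B, it is not the case that both e_{G_1}(A,B) ≥ 5/2 and e_{G_2}(A,B) ≥ 5/2. In particular, one cannot in general guarantee a bipartition with e_{G_i}(A,B) ≥ m_i/2 simultaneously for two graphs. -/
import Mathlib

/-- `eBetween G A B` is the number of edges of `G` with one endvertex in `A`
and the other in `B`. -/
noncomputable def eBetween (G : SimpleGraph (Fin 5)) (A B : Finset (Fin 5)) : ℕ :=
  letI : DecidableRel G.Adj := Classical.decRel G.Adj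
  (G.edgeFinset.filter fun e => ∃ a ∈ A, ∃ b ∈ B, e = s(a, b)).card

lemma eBetween_eq (G : SimpleGraph (Fin 5)) [DecidableRel G.Adj] (A B : Finset (Fin 5)) :
    eBetween G A B =
      (G.edgeFinset.filter fun e => ∃ a ∈ A, ∃ b ∈ B, e = s(a, b)).card := by
  unfold eBetween
  congr!

/-- The doubling map on `Fin 5` as an equiv. -/
def dbl : Fin 5 ≃ Fin 5 where
  toFun x := 2 * x
  invFun x := 3 * x
  left_inv := by decide
  right_inv := by decide

/-- There are two edge-disjoint 5-cycles `G₁`, `G₂` on the same 5-element vertex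
set such that no bipartition `(A, B)` of the vertex set satisfies both
`e_{G₁}(A,B) ≥ 5/2` and `e_{G₂}(A,B) ≥ 5/2`. -/
theorem two_cycles_no_simultaneous_half_cut :
    ∃ G₁ G₂ : SimpleGraph (Fin 5),
      Nonempty (G₁ ≃g SimpleGraph.cycleGraph 5) ∧
      Nonempty (G₂ ≃g SimpleGraph.cycleGraph 5) ∧
      Disjoint G₁.edgeSet G₂.edgeSet ∧
      ∀ A B : Finset (Fin 5), Disjoint A B → A ∪ B = Finset.univ →
        ¬ ((eBetween G₁ A B : ℝ) ≥ 5 / 2 ∧ (eBetween G₂ A B : ℝ) ≥ 5 / 2) := by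
  refine ⟨SimpleGraph.cycleGraph 5, (SimpleGraph.cycleGraph 5).comap dbl.toEmbedding,
    ⟨SimpleGraph.Iso.refl⟩, ⟨SimpleGraph.Iso.comap dbl _⟩, ?_, ?_⟩
  · rw [Set.disjoint_left]
    intro e
    induction e with
    | h a b =>
      simp only [SimpleGraph.mem_edgeSet]
      revert a b
      decide
  · intro A B hd hu ⟨h1, h2⟩
    rw [ge_iff_le, div_le_iff₀ (by norm_num)] at h1 h2
    have h1' : 3 ≤ eBetween (SimpleGraph.cycleGraph 5) A B := by
      by_contra h
      have : (eBetween (SimpleGraph.cycleGraph 5) A B : ℝ) ≤ 2 := by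
        exact_mod_cast Nat.le_of_lt_succ (Nat.lt_of_not_le h)
      linarith
    have h2' : 3 ≤ eBetween ((SimpleGraph.cycleGraph 5).comap dbl.toEmbedding) A B := by
      by_contra h
      have : (eBetween ((SimpleGraph.cycleGraph 5).comap dbl.toEmbedding) A B : ℝ) ≤ 2 := by
        exact_mod_cast Nat.le_of_lt_succ (Nat.lt_of_not_le h)
      linarith
    rw [eBetween_eq] at h1' h2'
    clear h1 h2
    revert hd hu h1' h2'
    revert A B
    decide
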